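/- arXiv:2504.01471 — 5 statements merged into one kernel-verified Lean document; each statement's English description precedes it below -/
import Mathlib

section
/- For the cut-off Coulomb force f^N and its dominating function g^N, there exists a constant C > 0 independent of N such that for all x, ξ ∈ ℝ^3 with |ξ| ≤ 2 N^{-β}, one has |f^N(x + ξ) - f^N(x)| ≤ C g^N(x) |ξ|. -/
noncomputable def fN (a β : ℝ) (N : ℕ) (q : EuclideanSpace ℝ (Fin 3)) :
    EuclideanSpace ℝ (Fin 3) :=
  if ‖q‖ ≤ (N : ℝ) ^ (-β) then (a * (N : ℝ) ^ (3 * β)) • q else (a / ‖q‖ ^ 3) • q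

noncomputable def gN (β : ℝ) (N : ℕ) (q : EuclideanSpace ℝ (Fin 3)) : ℝ :=
  if ‖q‖ ≤ 3 * (N : ℝ) ^ (-β) then 2 * (N : ℝ) ^ (3 * β) else 54 / ‖q‖ ^ 3

lemma cube_ineq {m P Q : ℝ} (hm : 0 < m) (hp : m ≤ P) (hq : m ≤ Q) :
    m ^ 3 * (Q ^ 2 + Q * P + P ^ 2) ≤ 3 * (P ^ 3 * Q ^ 2) := by
  have hP : 0 < P := hm.trans_le hp
  have hQ : 0 < Q := hm.trans_le hq
  have h1 : m ^ 3 ≤ P ^ 3 := pow_le_pow_left₀ hm.le hp 3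
  have h2 : m ^ 3 ≤ P ^ 2 * Q := by
    have hmm : m * m ≤ P * P := mul_le_mul hp hp hm.le hP.le
    have := mul_le_mul hmm hq hm.le (by positivity)
    nlinarith
  have h3 : m ^ 3 ≤ P * Q ^ 2 := by
    have hmm : m * m ≤ Q * Q := mul_le_mul hq hq hm.le hQ.le
    have := mul_le_mul hp hmm (by positivity) hP.le
    nlinarith
  nlinarith [mul_le_mul_of_nonneg_right h1 (sq_nonneg Q),
    mul_le_mul_of_nonneg_right h2 (mul_nonneg hQ.le hP.le),
    mul_le_mul_of_nonneg_right h3 (sq_nonneg P)]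

lemma outer_lip {E : Type*} [NormedAddCommGroup E] [NormedSpace ℝ E]
    {m : ℝ} (hm : 0 < m) (p q : E) (hp : m ≤ ‖p‖) (hq : m ≤ ‖q‖) :
    ‖(1 / ‖p‖ ^ 3) • p - (1 / ‖q‖ ^ 3) • q‖ ≤ 4 / m ^ 3 * ‖p - q‖ := by
  have hP : 0 < ‖p‖ := hm.trans_le hp
  have hQ : 0 < ‖q‖ := hm.trans_le hq
  set P := ‖p‖ with hPdef
  set Q := ‖q‖ with hQdef
  set d := ‖p - q‖ with hddef
  have hd : 0 ≤ d := norm_nonneg _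
  have hkey : (1 / P ^ 3) • p - (1 / Q ^ 3) • q
      = (1 / P ^ 3) • (p - q) + (1 / P ^ 3 - 1 / Q ^ 3) • q := by module
  have habs : |P - Q| ≤ d := abs_norm_sub_norm_le p q
  have h1 : ‖(1 / P ^ 3) • (p - q)‖ = (1 / P ^ 3) * d := by
    rw [norm_smul, Real.norm_eq_abs, abs_of_pos (by positivity)]
  have h2 : ‖(1 / P ^ 3 - 1 / Q ^ 3) • q‖ = |1 / P ^ 3 - 1 / Q ^ 3| * Q := by
    rw [norm_smul, Real.norm_eq_abs]
  have hfact : 1 / P ^ 3 - 1 / Q ^ 3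
      = (Q - P) * (Q ^ 2 + Q * P + P ^ 2) / (P ^ 3 * Q ^ 3) := by
    field_simp; ring
  have h3 : |1 / P ^ 3 - 1 / Q ^ 3| ≤ d * (Q ^ 2 + Q * P + P ^ 2) / (P ^ 3 * Q ^ 3) := by
    rw [hfact, abs_div, abs_of_pos (by positivity : (0:ℝ) < P ^ 3 * Q ^ 3), abs_mul,
      abs_of_nonneg (by positivity : (0:ℝ) ≤ Q ^ 2 + Q * P + P ^ 2)]
    gcongr
    rw [abs_sub_comm]; exact habs
  have h4 : d * (Q ^ 2 + Q * P + P ^ 2) / (P ^ 3 * Q ^ 3) * Q ≤ 3 / m ^ 3 * d := by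
    rw [div_mul_eq_mul_div, div_mul_eq_mul_div, div_le_div_iff₀ (by positivity) (by positivity)]
    have := mul_le_mul_of_nonneg_left (cube_ineq hm hp hq) (mul_nonneg hd hQ.le)
    nlinarith
  have h5 : 1 / P ^ 3 * d ≤ 1 / m ^ 3 * d := by
    gcongr
  calc ‖(1 / P ^ 3) • p - (1 / Q ^ 3) • q‖
      ≤ ‖(1 / P ^ 3) • (p - q)‖ + ‖(1 / P ^ 3 - 1 / Q ^ 3) • q‖ := by
        rw [hkey]; exact norm_add_le _ _
    _ ≤ 1 / m ^ 3 * d + 3 / m ^ 3 * d := by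
        rw [h1, h2]
        have := mul_le_mul_of_nonneg_right h3 hQ.le
        linarith
    _ = 4 / m ^ 3 * d := by ring

lemma mixed_lip {E : Type*} [NormedAddCommGroup E] [NormedSpace ℝ E]
    {m : ℝ} (hm : 0 < m) (p q : E) (hp : ‖p‖ ≤ m) (hq : m ≤ ‖q‖) :
    ‖(1 / ‖q‖ ^ 3) • q - (1 / m ^ 3) • p‖ ≤ 4 / m ^ 3 * ‖q - p‖ := by
  have hQ : 0 < ‖q‖ := hm.trans_le hq
  have hP : 0 ≤ ‖p‖ := norm_nonneg _
  set P := ‖p‖ with hPdef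
  set Q := ‖q‖ with hQdef
  set d := ‖q - p‖ with hddef
  have hd : 0 ≤ d := norm_nonneg _
  have habs : Q - P ≤ d := by
    have := abs_norm_sub_norm_le q p
    exact (le_abs_self _).trans this
  have hkey : (1 / Q ^ 3) • q - (1 / m ^ 3) • p
      = (1 / Q ^ 3) • (q - p) + (1 / Q ^ 3 - 1 / m ^ 3) • p := by module
  have h1 : ‖(1 / Q ^ 3) • (q - p)‖ = (1 / Q ^ 3) * d := by
    rw [norm_smul, Real.norm_eq_abs, abs_of_pos (by positivity)]
  have h2 : ‖(1 / Q ^ 3 - 1 / m ^ 3) • p‖ = |1 / Q ^ 3 - 1 / m ^ 3| * P := by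
    rw [norm_smul, Real.norm_eq_abs]
  have hfact : 1 / Q ^ 3 - 1 / m ^ 3
      = -((Q - m) * (Q ^ 2 + Q * m + m ^ 2) / (m ^ 3 * Q ^ 3)) := by
    field_simp; ring
  have h3 : |1 / Q ^ 3 - 1 / m ^ 3|
      = (Q - m) * (Q ^ 2 + Q * m + m ^ 2) / (m ^ 3 * Q ^ 3) := by
    rw [hfact, abs_neg, abs_of_nonneg]
    exact div_nonneg (mul_nonneg (by linarith) (by positivity)) (by positivity)
  have h4 : (Q - m) * (Q ^ 2 + Q * m + m ^ 2) / (m ^ 3 * Q ^ 3) * P ≤ 3 / m ^ 3 * d := by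
    rw [div_mul_eq_mul_div, div_mul_eq_mul_div, div_le_div_iff₀ (by positivity) (by positivity)]
    have hA : Q - m ≤ d := by linarith
    have hB : Q ^ 2 + Q * m + m ^ 2 ≤ 3 * Q ^ 2 := by nlinarith
    have hC : P ≤ Q := hp.trans hq
    have hchain : (Q - m) * (Q ^ 2 + Q * m + m ^ 2) * P ≤ d * (3 * Q ^ 2) * Q := by
      have h0 : (Q - m) * (Q ^ 2 + Q * m + m ^ 2) ≤ d * (3 * Q ^ 2) :=
        mul_le_mul hA hB (by positivity) hd
      exact mul_le_mul h0 hC hP (by positivity)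
    nlinarith [mul_le_mul_of_nonneg_right hchain (by positivity : (0:ℝ) ≤ m ^ 3)]
  have h5 : 1 / Q ^ 3 * d ≤ 1 / m ^ 3 * d := by
    gcongr
  calc ‖(1 / Q ^ 3) • q - (1 / m ^ 3) • p‖
      ≤ ‖(1 / Q ^ 3) • (q - p)‖ + ‖(1 / Q ^ 3 - 1 / m ^ 3) • p‖ := by
        rw [hkey]; exact norm_add_le _ _
    _ ≤ 1 / m ^ 3 * d + 3 / m ^ 3 * d := by
        rw [h1, h2, h3]
        linarith
    _ = 4 / m ^ 3 * d := by ring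

theorem increment_bound_fN_gN (β : ℝ) (hβ : 0 < β) (a : ℝ) (ha : a = 1 ∨ a = -1) :
    ∃ C > (0 : ℝ), ∀ (N : ℕ) (x ξ : EuclideanSpace ℝ (Fin 3)),
      ‖ξ‖ ≤ 2 * (N : ℝ) ^ (-β) →
      ‖fN a β N (x + ξ) - fN a β N x‖ ≤ C * gN β N x * ‖ξ‖ := by
  have haa : |a| = 1 := by rcases ha with h | h <;> simp [h]
  refine ⟨2, by norm_num, ?_⟩
  intro N x ξ hξ
  rcases Nat.eq_zero_or_pos N with hN | hN
  · subst hN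
    have h0 : ((0:ℕ) : ℝ) ^ (-β) = 0 := by
      rw [Nat.cast_zero, Real.zero_rpow (neg_ne_zero.mpr hβ.ne')]
    have hξ0 : ξ = 0 := norm_le_zero_iff.mp (by rw [h0] at hξ; linarith)
    simp [hξ0]
  · have hN0 : (0:ℝ) < (N : ℝ) := by exact_mod_cast hN
    set r : ℝ := (N : ℝ) ^ (-β) with hrdef
    have hr : 0 < r := Real.rpow_pos_of_pos hN0 _
    have hrpow : r ^ 3 = (N : ℝ) ^ (-(3 * β)) := by
      rw [hrdef, ← Real.rpow_natCast ((N:ℝ) ^ (-β)) 3, ← Real.rpow_mul hN0.le]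
      norm_num
      ring_nf
    have hNpow : (N : ℝ) ^ (3 * β) = 1 / r ^ 3 := by
      rw [hrpow, Real.rpow_neg hN0.le, one_div, inv_inv]
    have hξ' : ‖ξ‖ ≤ 2 * r := hξ
    by_cases hx3 : ‖x‖ ≤ 3 * r
    · -- g = 2 N^{3β} = 2/r³
      have hg : gN β N x = 2 * (1 / r ^ 3) := by
        rw [gN, if_pos hx3, hNpow]
      rw [hg]
      by_cases hx : ‖x‖ ≤ r
      · by_cases hy : ‖x + ξ‖ ≤ r
        · -- both inner
          rw [fN, fN, if_pos hy, if_pos hx, ← smul_sub, add_sub_cancel_left, norm_smul,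
            Real.norm_eq_abs, abs_mul, haa, one_mul, hNpow,
            abs_of_pos (by positivity : (0:ℝ) < 1 / r ^ 3)]
          have h1 : 0 ≤ ‖ξ‖ := norm_nonneg _
          have h2 : 0 < 1 / r ^ 3 := by positivity
          nlinarith
        · -- x inner, x+ξ outer
          have hy' : r ≤ ‖x + ξ‖ := (not_le.mp hy).le
          rw [fN, fN, if_neg hy, if_pos hx, hNpow]
          have hasm : (a / ‖x + ξ‖ ^ 3) • (x + ξ) - (a * (1 / r ^ 3)) • x
              = a • ((1 / ‖x + ξ‖ ^ 3) • (x + ξ) - (1 / r ^ 3) • x) := by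
            rw [smul_sub, smul_smul, smul_smul]; ring_nf
          rw [hasm, norm_smul, Real.norm_eq_abs, haa, one_mul]
          have := mixed_lip hr x (x + ξ) hx hy'
          rw [add_sub_cancel_left] at this
          calc ‖(1 / ‖x + ξ‖ ^ 3) • (x + ξ) - (1 / r ^ 3) • x‖
              ≤ 4 / r ^ 3 * ‖ξ‖ := this
            _ = 2 * (2 * (1 / r ^ 3)) * ‖ξ‖ := by ring
      · by_cases hy : ‖x + ξ‖ ≤ r
        · -- x outer, x+ξ inner
          have hx' : r ≤ ‖x‖ := (not_le.mp hx).le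
          rw [fN, fN, if_pos hy, if_neg hx, hNpow]
          have hasm : (a * (1 / r ^ 3)) • (x + ξ) - (a / ‖x‖ ^ 3) • x
              = a • ((1 / r ^ 3) • (x + ξ) - (1 / ‖x‖ ^ 3) • x) := by
            rw [smul_sub, smul_smul, smul_smul]; ring_nf
          rw [hasm, norm_smul, Real.norm_eq_abs, haa, one_mul, norm_sub_rev]
          have := mixed_lip hr (x + ξ) x hy hx'
          have hxx : x - (x + ξ) = -ξ := by abel
          rw [hxx, norm_neg] at this
          calc ‖(1 / ‖x‖ ^ 3) • x - (1 / r ^ 3) • (x + ξ)‖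
              ≤ 4 / r ^ 3 * ‖ξ‖ := this
            _ = 2 * (2 * (1 / r ^ 3)) * ‖ξ‖ := by ring
        · -- both outer
          have hx' : r ≤ ‖x‖ := (not_le.mp hx).le
          have hy' : r ≤ ‖x + ξ‖ := (not_le.mp hy).le
          rw [fN, fN, if_neg hy, if_neg hx]
          have hasm : (a / ‖x + ξ‖ ^ 3) • (x + ξ) - (a / ‖x‖ ^ 3) • x
              = a • ((1 / ‖x + ξ‖ ^ 3) • (x + ξ) - (1 / ‖x‖ ^ 3) • x) := by
            rw [smul_sub, smul_smul, smul_smul]; ring_nf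
          rw [hasm, norm_smul, Real.norm_eq_abs, haa, one_mul]
          have := outer_lip hr (x + ξ) x hy' hx'
          rw [add_sub_cancel_left] at this
          calc ‖(1 / ‖x + ξ‖ ^ 3) • (x + ξ) - (1 / ‖x‖ ^ 3) • x‖
              ≤ 4 / r ^ 3 * ‖ξ‖ := this
            _ = 2 * (2 * (1 / r ^ 3)) * ‖ξ‖ := by ring
    · -- far field: ‖x‖ > 3r
      have hX : 3 * r < ‖x‖ := not_le.mp hx3
      have hXpos : 0 < ‖x‖ := by linarith
      have hg : gN β N x = 54 / ‖x‖ ^ 3 := by rw [gN, if_neg hx3]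
      rw [hg]
      have hm : (0:ℝ) < ‖x‖ / 3 := by linarith
      have hxm : ‖x‖ / 3 ≤ ‖x‖ := by linarith
      have hlow : ‖x‖ ≤ ‖x + ξ‖ + ‖ξ‖ := by
        calc ‖x‖ = ‖(x + ξ) - ξ‖ := by rw [add_sub_cancel_right]
          _ ≤ ‖x + ξ‖ + ‖ξ‖ := norm_sub_le _ _
      have hym : ‖x‖ / 3 ≤ ‖x + ξ‖ := by linarith
      have hx : ¬ ‖x‖ ≤ r := by push_neg; linarith
      have hy : ¬ ‖x + ξ‖ ≤ r := by push_neg; linarith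
      rw [fN, fN, if_neg hy, if_neg hx]
      have hasm : (a / ‖x + ξ‖ ^ 3) • (x + ξ) - (a / ‖x‖ ^ 3) • x
          = a • ((1 / ‖x + ξ‖ ^ 3) • (x + ξ) - (1 / ‖x‖ ^ 3) • x) := by
        rw [smul_sub, smul_smul, smul_smul]; ring_nf
      rw [hasm, norm_smul, Real.norm_eq_abs, haa, one_mul]
      have := outer_lip hm (x + ξ) x hym hxm
      rw [add_sub_cancel_left] at this
      calc ‖(1 / ‖x + ξ‖ ^ 3) • (x + ξ) - (1 / ‖x‖ ^ 3) • x‖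
          ≤ 4 / (‖x‖ / 3) ^ 3 * ‖ξ‖ := this
        _ = 2 * (54 / ‖x‖ ^ 3) * ‖ξ‖ := by
            have hXne : ‖x‖ ≠ 0 := ne_of_gt hXpos
            rw [div_pow]
            field_simp
            ring
end

section
/- Let X_t, X̄_t ∈ ℝ^{6N} be two N-particle phase-space configurations with spatial components (q_1,...,q_N) and (q̄_1,...,q̄_N). If the sup-norm distance ‖X_t - X̄_t‖_∞ ≤ 2 N^{-β}, then the total forces satisfy ‖F^N(X_t) - F^N(X̄_t)‖_∞ ≤ C ‖G^N(X̄_t)‖_∞ ‖X_t - X̄_t‖_∞ for some constant C > 0 independent of N, where (F^N(X))_i = (1/N) Σ_{j≠i} f^N(q_i - q_j) and (G^N(X))_i = (1/N) Σ_{j≠i} g^N(q_i - q_j). -/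
/-- The total force on particle `i`: `(F^N(X))_i = (1/N) ∑_{j ≠ i} f^N(q_i - q_j)`. -/
noncomputable def Ftot (a β : ℝ) (N : ℕ) (Q : Fin N → EuclideanSpace ℝ (Fin 3))
    (i : Fin N) : EuclideanSpace ℝ (Fin 3) :=
  (N : ℝ)⁻¹ • ∑ j ∈ Finset.univ.erase i, fN a β N (Q i - Q j)

/-- The total fluctuation on particle `i`: `(G^N(X))_i = (1/N) ∑_{j ≠ i} g^N(q_i - q_j)`. -/
noncomputable def Gtot (β : ℝ) (N : ℕ) (Q : Fin N → EuclideanSpace ℝ (Fin 3))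
    (i : Fin N) : ℝ :=
  (N : ℝ)⁻¹ * ∑ j ∈ Finset.univ.erase i, gN β N (Q i - Q j)

lemma rpow_key (β : ℝ) (N : ℕ) (hN : 0 < N) :
    (N : ℝ) ^ (3 * β) = (((N : ℝ) ^ (-β)) ^ (3 : ℕ))⁻¹ := by
  have hNpos : (0:ℝ) < N := Nat.cast_pos.mpr hN
  have h1 : ((N:ℝ) ^ (-β)) ^ (3:ℕ) = (N:ℝ) ^ (-(3*β)) := by
    rw [← Real.rpow_natCast ((N:ℝ) ^ (-β)) 3, ← Real.rpow_mul hNpos.le]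
    congr 1
    push_cast
    ring
  rw [h1, Real.rpow_neg hNpos.le, inv_inv]

lemma gN_nonneg (β : ℝ) (N : ℕ) (q : EuclideanSpace ℝ (Fin 3)) : 0 ≤ gN β N q := by
  unfold gN
  split_ifs with h
  · positivity
  · positivity

lemma fN_eq (a β : ℝ) (N : ℕ) (hN : 0 < N) (q : EuclideanSpace ℝ (Fin 3)) :
    fN a β N q = a • ((max ‖q‖ ((N : ℝ) ^ (-β))) ^ 3)⁻¹ • q := by
  unfold fN
  split_ifs with h
  · rw [max_eq_right h, ← rpow_key β N hN, smul_smul]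
  · rw [max_eq_left (not_le.mp h).le, smul_smul, div_eq_mul_inv]

lemma gen_est {E : Type*} [NormedAddCommGroup E] [NormedSpace ℝ E]
    (x y : E) (mx my : ℝ) (h1 : 0 < mx) (h2 : 0 < my)
    (hy : ‖y‖ ≤ my) (hm : |mx - my| ≤ ‖x - y‖) :
    ‖(mx ^ 3)⁻¹ • x - (my ^ 3)⁻¹ • y‖ ≤
      (1 / mx ^ 3 + (mx ^ 2 + mx * my + my ^ 2) / (mx ^ 3 * my ^ 2)) * ‖x - y‖ := by
  have hkey : (mx ^ 3)⁻¹ • x - (my ^ 3)⁻¹ • y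
      = (mx ^ 3)⁻¹ • (x - y) + ((mx ^ 3)⁻¹ - (my ^ 3)⁻¹) • y := by
    rw [smul_sub, sub_smul]; abel
  rw [hkey]
  have h3 : ‖(mx ^ 3)⁻¹ • (x - y)‖ = (mx ^ 3)⁻¹ * ‖x - y‖ := by
    rw [norm_smul, Real.norm_eq_abs, abs_of_pos (by positivity)]
  have h4 : ‖((mx ^ 3)⁻¹ - (my ^ 3)⁻¹) • y‖ ≤ |(mx ^ 3)⁻¹ - (my ^ 3)⁻¹| * my := by
    rw [norm_smul, Real.norm_eq_abs]
    exact mul_le_mul_of_nonneg_left hy (abs_nonneg _)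
  have h5 : |(mx ^ 3)⁻¹ - (my ^ 3)⁻¹|
      ≤ ‖x - y‖ * (mx ^ 2 + mx * my + my ^ 2) / (mx ^ 3 * my ^ 3) := by
    have he : (mx ^ 3)⁻¹ - (my ^ 3)⁻¹ = (my ^ 3 - mx ^ 3) / (mx ^ 3 * my ^ 3) := by
      field_simp
    rw [he, abs_div, abs_of_pos (by positivity : (0:ℝ) < mx ^ 3 * my ^ 3)]
    apply div_le_div_of_nonneg_right _ (by positivity)
    have hfac : my ^ 3 - mx ^ 3 = (my - mx) * (my ^ 2 + my * mx + mx ^ 2) := by ring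
    rw [hfac, abs_mul]
    have hmm : |my - mx| ≤ ‖x - y‖ := by rwa [abs_sub_comm]
    have hp : |my ^ 2 + my * mx + mx ^ 2| = my ^ 2 + my * mx + mx ^ 2 :=
      abs_of_pos (by positivity)
    rw [hp]
    calc |my - mx| * (my ^ 2 + my * mx + mx ^ 2)
        ≤ ‖x - y‖ * (my ^ 2 + my * mx + mx ^ 2) :=
          mul_le_mul_of_nonneg_right hmm (by positivity)
      _ = ‖x - y‖ * (mx ^ 2 + mx * my + my ^ 2) := by ring
  calc ‖(mx ^ 3)⁻¹ • (x - y) + ((mx ^ 3)⁻¹ - (my ^ 3)⁻¹) • y‖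
      ≤ ‖(mx ^ 3)⁻¹ • (x - y)‖ + ‖((mx ^ 3)⁻¹ - (my ^ 3)⁻¹) • y‖ := norm_add_le _ _
    _ ≤ (mx ^ 3)⁻¹ * ‖x - y‖
        + (‖x - y‖ * (mx ^ 2 + mx * my + my ^ 2) / (mx ^ 3 * my ^ 3)) * my := by
        rw [h3]
        gcongr
        exact h4.trans (mul_le_mul_of_nonneg_right h5 h2.le)
    _ = (1 / mx ^ 3 + (mx ^ 2 + mx * my + my ^ 2) / (mx ^ 3 * my ^ 2)) * ‖x - y‖ := by
        field_simp

set_option maxHeartbeats 1000000 in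
lemma key_est (β a : ℝ) (ha : |a| = 1) (N : ℕ) (hN : 0 < N)
    (x y : EuclideanSpace ℝ (Fin 3)) (hd : ‖x - y‖ ≤ 4 * (N : ℝ) ^ (-β)) :
    ‖fN a β N x - fN a β N y‖ ≤ 100 * gN β N y * ‖x - y‖ := by
  have hNpos : (0:ℝ) < N := Nat.cast_pos.mpr hN
  set δ : ℝ := (N : ℝ) ^ (-β) with hδdef
  have hδ : 0 < δ := Real.rpow_pos_of_pos hNpos _
  set mx : ℝ := max ‖x‖ δ with hmx
  set my : ℝ := max ‖y‖ δ with hmy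
  have hmx0 : 0 < mx := lt_of_lt_of_le hδ (le_max_right _ _)
  have hmy0 : 0 < my := lt_of_lt_of_le hδ (le_max_right _ _)
  have hδmx : δ ≤ mx := le_max_right _ _
  have hδmy : δ ≤ my := le_max_right _ _
  have hyle : ‖y‖ ≤ my := le_max_left _ _
  have hm : |mx - my| ≤ ‖x - y‖ :=
    (abs_max_sub_max_le_abs _ _ _).trans (abs_norm_sub_norm_le x y)
  have hrw : fN a β N x - fN a β N y
      = a • ((mx ^ 3)⁻¹ • x - (my ^ 3)⁻¹ • y) := by
    rw [fN_eq a β N hN x, fN_eq a β N hN y, smul_sub]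
  have hnorm : ‖fN a β N x - fN a β N y‖ = ‖(mx ^ 3)⁻¹ • x - (my ^ 3)⁻¹ • y‖ := by
    rw [hrw, norm_smul, Real.norm_eq_abs, ha, one_mul]
  rw [hnorm]
  have hgen := gen_est x y mx my hmx0 hmy0 hyle hm
  refine hgen.trans ?_
  apply mul_le_mul_of_nonneg_right _ (norm_nonneg _)
  -- bound the coefficient by 100 * gN β N y
  unfold gN
  split_ifs with h
  · -- ‖y‖ ≤ 3δ : my ≤ 3δ, mx ≤ 7δ
    rw [rpow_key β N hN, ← hδdef]
    have hmy3 : my ≤ 3 * δ := max_le h (by linarith)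
    have hmxmy : mx ≤ my + ‖x - y‖ := by
      have := (abs_le.mp hm).2; linarith
    have hmx7 : mx ≤ 7 * δ := by linarith
    have e1 : 1 / mx ^ 3 ≤ 1 / δ ^ 3 := by
      apply one_div_le_one_div_of_le (by positivity)
      exact pow_le_pow_left₀ hδ.le hδmx 3
    have e2 : (mx ^ 2 + mx * my + my ^ 2) / (mx ^ 3 * my ^ 2) ≤ 79 * δ ^ 2 / δ ^ 5 := by
      apply div_le_div₀ (by positivity)
      · nlinarith
      · positivity
      · calc δ ^ 5 = δ ^ 3 * δ ^ 2 := by ring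
          _ ≤ mx ^ 3 * my ^ 2 := by
              apply mul_le_mul (pow_le_pow_left₀ hδ.le hδmx 3)
                (pow_le_pow_left₀ hδ.le hδmy 2) (by positivity) (by positivity)
    have e3 : 79 * δ ^ 2 / δ ^ 5 = 79 / δ ^ 3 := by
      field_simp
    have e4 : (1:ℝ) / δ ^ 3 + 79 / δ ^ 3 ≤ 100 * (2 * (δ ^ (3:ℕ))⁻¹) := by
      rw [← add_div]
      rw [div_le_iff₀ (by positivity)]
      field_simp
      norm_num
    calc 1 / mx ^ 3 + (mx ^ 2 + mx * my + my ^ 2) / (mx ^ 3 * my ^ 2)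
        ≤ 1 / δ ^ 3 + 79 / δ ^ 3 := by rw [← e3]; exact add_le_add e1 e2
      _ ≤ 100 * (2 * (δ ^ (3:ℕ))⁻¹) := e4
  · -- ‖y‖ > 3δ : my = ‖y‖
    have h3 : 3 * δ < ‖y‖ := not_le.mp h
    have hmyy : my = ‖y‖ := max_eq_left (by linarith)
    have hd4 : ‖x - y‖ ≤ 4 * δ := hd
    have hmxmy : mx ≤ my + ‖x - y‖ := by
      have := (abs_le.mp hm).2; linarith
    have hmymx : my ≤ mx + ‖x - y‖ := by
      have := (abs_le.mp hm).1; linarith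
    have hmy3 : 3 * δ < my := by rw [hmyy]; exact h3
    have hmx3 : mx ≤ 3 * my := by linarith
    have hmy7 : my ≤ 7 * mx := by
      rcases le_or_gt (7 * δ) my with hc | hc
      · linarith
      · linarith
    have hcube : my ^ 3 ≤ 343 * mx ^ 3 := by
      calc my ^ 3 ≤ (7 * mx) ^ 3 := pow_le_pow_left₀ hmy0.le hmy7 3
        _ = 343 * mx ^ 3 := by ring
    have e1 : 1 / mx ^ 3 ≤ 343 / my ^ 3 := by
      rw [div_le_div_iff₀ (by positivity) (by positivity)]
      linarith
    have e2 : (mx ^ 2 + mx * my + my ^ 2) / (mx ^ 3 * my ^ 2) ≤ 4459 / my ^ 3 := by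
      rw [div_le_div_iff₀ (by positivity) (by positivity)]
      have hn : mx ^ 2 + mx * my + my ^ 2 ≤ 13 * my ^ 2 := by nlinarith
      calc (mx ^ 2 + mx * my + my ^ 2) * my ^ 3
          ≤ 13 * my ^ 2 * my ^ 3 := mul_le_mul_of_nonneg_right hn (by positivity)
        _ = (13 * my ^ 2) * my ^ 3 := by ring
        _ ≤ (13 * my ^ 2) * (343 * mx ^ 3) :=
            mul_le_mul_of_nonneg_left hcube (by positivity)
        _ = 4459 * (mx ^ 3 * my ^ 2) := by ring
    have hfin : (343:ℝ) / my ^ 3 + 4459 / my ^ 3 ≤ 100 * (54 / ‖y‖ ^ 3) := by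
      have h54 : 100 * (54 / ‖y‖ ^ 3) = 5400 / my ^ 3 := by rw [hmyy]; ring
      rw [h54, ← add_div]
      gcongr
      norm_num
    calc 1 / mx ^ 3 + (mx ^ 2 + mx * my + my ^ 2) / (mx ^ 3 * my ^ 2)
        ≤ 343 / my ^ 3 + 4459 / my ^ 3 := add_le_add e1 e2
      _ ≤ 100 * (54 / ‖y‖ ^ 3) := hfin

theorem total_force_lipschitz (β : ℝ) (hβ : 0 < β) (a : ℝ) (ha : a = 1 ∨ a = -1) :
    ∃ C > (0 : ℝ), ∀ (N : ℕ) (hN : 0 < N)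
      (Q Qb : Fin N → EuclideanSpace ℝ (Fin 3)),
      (∀ i, ‖Q i - Qb i‖ ≤ 2 * (N : ℝ) ^ (-β)) →
      ∀ i, ‖Ftot a β N Q i - Ftot a β N Qb i‖ ≤
        C * (Finset.univ.sup' ⟨⟨0, hN⟩, Finset.mem_univ _⟩ fun j => Gtot β N Qb j) *
          (Finset.univ.sup' ⟨⟨0, hN⟩, Finset.mem_univ _⟩ fun j => ‖Q j - Qb j‖) := by
  refine ⟨200, by norm_num, ?_⟩
  intro N hN Q Qb hQ i
  have haabs : |a| = 1 := by rcases ha with h | h <;> simp [h]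
  have hNpos : (0:ℝ) < N := Nat.cast_pos.mpr hN
  set δ : ℝ := (N : ℝ) ^ (-β) with hδdef
  have hδ : 0 < δ := Real.rpow_pos_of_pos hNpos _
  set ne : Finset.Nonempty (Finset.univ : Finset (Fin N)) :=
    ⟨⟨0, hN⟩, Finset.mem_univ _⟩ with hne
  set supG : ℝ := Finset.univ.sup' ne fun j => Gtot β N Qb j with hsupG
  set supD : ℝ := Finset.univ.sup' ne fun j => ‖Q j - Qb j‖ with hsupD
  have hsupD0 : 0 ≤ supD :=
    le_trans (norm_nonneg _) (Finset.le_sup' (fun j => ‖Q j - Qb j‖) (Finset.mem_univ i))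
  have hDle : ∀ j, ‖Q j - Qb j‖ ≤ supD := fun j =>
    Finset.le_sup' (fun j => ‖Q j - Qb j‖) (Finset.mem_univ j)
  have hGle : Gtot β N Qb i ≤ supG :=
    Finset.le_sup' (fun j => Gtot β N Qb j) (Finset.mem_univ i)
  -- pairwise difference bound
  have hpair : ∀ j, ‖(Q i - Q j) - (Qb i - Qb j)‖ ≤ ‖Q i - Qb i‖ + ‖Q j - Qb j‖ := by
    intro j
    have : (Q i - Q j) - (Qb i - Qb j) = (Q i - Qb i) - (Q j - Qb j) := by abel
    rw [this]
    exact norm_sub_le _ _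
  have hterm : ∀ j, ‖fN a β N (Q i - Q j) - fN a β N (Qb i - Qb j)‖
      ≤ 200 * supD * gN β N (Qb i - Qb j) := by
    intro j
    have h4 : ‖(Q i - Q j) - (Qb i - Qb j)‖ ≤ 4 * δ := by
      have := hpair j
      have h1 := hQ i
      have h2 := hQ j
      linarith
    have hkey := key_est β a haabs N hN (Q i - Q j) (Qb i - Qb j) h4
    refine hkey.trans ?_
    have h2s : ‖(Q i - Q j) - (Qb i - Qb j)‖ ≤ 2 * supD := by
      have := hpair j
      have h1 := hDle i
      have h2 := hDle j
      linarith
    calc 100 * gN β N (Qb i - Qb j) * ‖(Q i - Q j) - (Qb i - Qb j)‖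
        ≤ 100 * gN β N (Qb i - Qb j) * (2 * supD) := by
          apply mul_le_mul_of_nonneg_left h2s
          have := gN_nonneg β N (Qb i - Qb j)
          positivity
      _ = 200 * supD * gN β N (Qb i - Qb j) := by ring
  have hFtot : Ftot a β N Q i - Ftot a β N Qb i
      = (N : ℝ)⁻¹ • ∑ j ∈ Finset.univ.erase i,
          (fN a β N (Q i - Q j) - fN a β N (Qb i - Qb j)) := by
    rw [Ftot, Ftot, ← smul_sub, ← Finset.sum_sub_distrib]
  rw [hFtot, norm_smul, Real.norm_eq_abs, abs_of_pos (by positivity : (0:ℝ) < (N:ℝ)⁻¹)]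
  have hsum : ‖∑ j ∈ Finset.univ.erase i,
      (fN a β N (Q i - Q j) - fN a β N (Qb i - Qb j))‖
      ≤ ∑ j ∈ Finset.univ.erase i, 200 * supD * gN β N (Qb i - Qb j) := by
    refine (norm_sum_le _ _).trans ?_
    exact Finset.sum_le_sum fun j _ => hterm j
  calc (N:ℝ)⁻¹ * ‖∑ j ∈ Finset.univ.erase i,
        (fN a β N (Q i - Q j) - fN a β N (Qb i - Qb j))‖
      ≤ (N:ℝ)⁻¹ * ∑ j ∈ Finset.univ.erase i, 200 * supD * gN β N (Qb i - Qb j) := by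
        apply mul_le_mul_of_nonneg_left hsum (by positivity)
    _ = 200 * Gtot β N Qb i * supD := by
        rw [← Finset.mul_sum, Gtot]
        ring
    _ ≤ 200 * supG * supD := by
        apply mul_le_mul_of_nonneg_right _ hsupD0
        have := mul_le_mul_of_nonneg_left hGle (by norm_num : (0:ℝ) ≤ 200)
        linarith
end

section
/- Let u : [0,∞) → [0,∞) be continuous and monotonically increasing, let l, f₁ : ℝ → [0,∞) and f₂ : ℝ × ℝ → [0,∞) be continuous, and suppose for some n ∈ ℕ that: (i) f₂(t₁, ·) is monotone increasing in its second argument for every t₁ > 0; (ii) there exist K₁, δ > 0 such that f₂(s, ·) is K₁-Lipschitz on [f₁(0), f₁(0)+δ] uniformly for s ∈ [0,δ]; (iii) for all t₁ > 0, f₁(t₁) + ∫₀^{t₁}⋯∫₀^{t_n} f₂(s, u(s)) ds dt_n ⋯ dt₂ < u(t₁) and f₁(t₁) + ∫₀^{t₁}⋯∫₀^{t_n} f₂(s, l(s)) ds dt_n ⋯ dt₂ ≥ l(t₁). Then l(t) ≤ u(t) for all t ≥ 0. -/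
open intervalIntegral

/-- The `n`-fold iterated integral `∫₀^{t}∫₀^{t_n}⋯∫₀^{t_2} g(s) ds dt_2 ⋯ dt_n`
(with `iterInt g 0 = g` and one integration added at each step). -/
noncomputable def iterInt (g : ℝ → ℝ) : ℕ → ℝ → ℝ
  | 0 => g
  | n + 1 => fun t => ∫ x in (0 : ℝ)..t, iterInt g n x

section helpers
open Set MeasureTheory

lemma continuous_iterInt {g : ℝ → ℝ} (hg : Continuous g) (n : ℕ) :
    Continuous (iterInt g n) := by
  induction n with
  | zero => exact hg
  | succ m ih =>
    show Continuous fun t => ∫ x in (0:ℝ)..t, iterInt g m x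
    exact intervalIntegral.continuous_primitive (fun a b => ih.intervalIntegrable a b) 0

lemma iterInt_zero_eval (g : ℝ → ℝ) (m : ℕ) : iterInt g (m + 1) 0 = 0 := by
  show (∫ x in (0:ℝ)..(0:ℝ), iterInt g m x) = 0
  exact intervalIntegral.integral_same

lemma iterInt_congr (g g' : ℝ → ℝ) (n : ℕ) (h : ∀ s ≥ (0:ℝ), g s = g' s) :
    ∀ t ≥ (0:ℝ), iterInt g n t = iterInt g' n t := by
  induction n with
  | zero => exact h
  | succ m ih =>
    intro t ht
    show (∫ x in (0:ℝ)..t, iterInt g m x) = ∫ x in (0:ℝ)..t, iterInt g' m x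
    apply intervalIntegral.integral_congr
    intro x hx
    rw [uIcc_of_le ht] at hx
    exact ih x hx.1

lemma iterInt_nonneg {g : ℝ → ℝ} (hg : Continuous g) (h : ∀ s, 0 ≤ g s) (n : ℕ) :
    ∀ t ≥ (0:ℝ), 0 ≤ iterInt g n t := by
  induction n with
  | zero => exact fun t _ => h t
  | succ m ih =>
    intro t ht
    show 0 ≤ ∫ x in (0:ℝ)..t, iterInt g m x
    apply intervalIntegral.integral_nonneg ht
    exact fun x hx => ih x hx.1

lemma iterInt_mono {g₁ g₂ : ℝ → ℝ} (h₁ : Continuous g₁) (h₂ : Continuous g₂)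
    {t : ℝ} (ht : 0 ≤ t) (hle : ∀ s ∈ Ioc (0:ℝ) t, g₁ s ≤ g₂ s) (n : ℕ) :
    ∀ x ∈ Icc (0:ℝ) t, iterInt g₁ (n + 1) x ≤ iterInt g₂ (n + 1) x := by
  induction n with
  | zero =>
    intro x hx
    show (∫ s in (0:ℝ)..x, g₁ s) ≤ ∫ s in (0:ℝ)..x, g₂ s
    rw [intervalIntegral.integral_of_le hx.1, intervalIntegral.integral_of_le hx.1]
    apply MeasureTheory.setIntegral_mono_on (h₁.integrableOn_Ioc) (h₂.integrableOn_Ioc)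
      measurableSet_Ioc
    exact fun s hs => hle s ⟨hs.1, hs.2.trans hx.2⟩
  | succ m ih =>
    intro x hx
    show (∫ s in (0:ℝ)..x, iterInt g₁ (m+1) s) ≤ ∫ s in (0:ℝ)..x, iterInt g₂ (m+1) s
    apply intervalIntegral.integral_mono_on hx.1
      ((continuous_iterInt h₁ (m+1)).intervalIntegrable _ _)
      ((continuous_iterInt h₂ (m+1)).intervalIntegrable _ _)
    exact fun s hs => ih s ⟨hs.1, hs.2.trans hx.2⟩

lemma iterInt_add {g h : ℝ → ℝ} (hg : Continuous g) (hh : Continuous h) (n : ℕ) (t : ℝ) :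
    iterInt (fun s => g s + h s) n t = iterInt g n t + iterInt h n t := by
  induction n generalizing t with
  | zero => rfl
  | succ m ih =>
    show (∫ x in (0:ℝ)..t, iterInt (fun s => g s + h s) m x) = _
    rw [intervalIntegral.integral_congr (g := fun x => iterInt g m x + iterInt h m x)
      (fun x _ => ih x)]
    exact intervalIntegral.integral_add ((continuous_iterInt hg m).intervalIntegrable _ _)
      ((continuous_iterInt hh m).intervalIntegrable _ _)

lemma iterInt_const_le {c : ℝ} (hc : 0 ≤ c) (n : ℕ) {t : ℝ} (ht : 0 ≤ t) (ht1 : t ≤ 1) :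
    iterInt (fun _ => c) (n + 1) t ≤ c * t := by
  induction n generalizing t with
  | zero =>
    show (∫ _ in (0:ℝ)..t, c) ≤ c * t
    simp [mul_comm]
  | succ m ih =>
    show (∫ x in (0:ℝ)..t, iterInt (fun _ => c) (m+1) x) ≤ c * t
    calc (∫ x in (0:ℝ)..t, iterInt (fun _ => c) (m+1) x)
        ≤ ∫ _ in (0:ℝ)..t, c := by
          apply intervalIntegral.integral_mono_on ht
            ((continuous_iterInt continuous_const (m+1)).intervalIntegrable _ _)
            (intervalIntegrable_const)
          intro s hs
          calc iterInt (fun _ => c) (m+1) s ≤ c * s := ih hs.1 (hs.2.trans ht1)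
            _ ≤ c * 1 := by nlinarith [hs.2.trans ht1]
            _ = c := mul_one c
      _ = c * t := by simp [mul_comm]

end helpers

theorem integral_gronwall (n : ℕ) (hn : 1 ≤ n)
    (u l f₁ : ℝ → ℝ) (f₂ : ℝ → ℝ → ℝ)
    (hu_cont : ContinuousOn u (Set.Ici 0)) (hu_mono : MonotoneOn u (Set.Ici 0))
    (hu_nonneg : ∀ t ≥ (0 : ℝ), 0 ≤ u t)
    (hl_cont : Continuous l) (hl_nonneg : ∀ t, 0 ≤ l t)
    (hf₁_cont : Continuous f₁) (hf₁_nonneg : ∀ t, 0 ≤ f₁ t)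
    (hf₂_cont : Continuous fun p : ℝ × ℝ => f₂ p.1 p.2)
    (hf₂_nonneg : ∀ s x, 0 ≤ f₂ s x)
    (hmono : ∀ t₁ > (0 : ℝ), ∀ x₁ x₂ : ℝ, x₁ < x₂ → f₂ t₁ x₁ ≤ f₂ t₁ x₂)
    (hLip : ∃ K₁ δ : ℝ, 0 < K₁ ∧ 0 < δ ∧
      ∀ s ∈ Set.Icc (0 : ℝ) δ, ∀ x ∈ Set.Icc (f₁ 0) (f₁ 0 + δ),
        ∀ y ∈ Set.Icc (f₁ 0) (f₁ 0 + δ), |f₂ s x - f₂ s y| ≤ K₁ * |x - y|)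
    (hint : ∀ t₁ > (0 : ℝ),
      f₁ t₁ + iterInt (fun s => f₂ s (u s)) n t₁ < u t₁ ∧
      l t₁ ≤ f₁ t₁ + iterInt (fun s => f₂ s (l s)) n t₁) :
    ∀ t ≥ (0 : ℝ), l t ≤ u t := by
  obtain ⟨K₁, δ, hK₁, hδ, hLip⟩ := hLip
  obtain ⟨m, rfl⟩ : ∃ m, n = m + 1 := ⟨n - 1, (Nat.succ_pred_eq_of_pos hn).symm⟩
  set v : ℝ → ℝ := fun s => u (max s 0) with hv_def
  have hv_cont : Continuous v :=
    hu_cont.comp_continuous (continuous_id.max continuous_const) fun x => Set.mem_Ici.mpr (le_max_right _ _)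
  have hv_eq : ∀ s, 0 ≤ s → v s = u s := fun s hs => by simp [hv_def, max_eq_left hs]
  have hgl_cont : Continuous fun s => f₂ s (l s) := hf₂_cont.comp (continuous_id.prodMk hl_cont)
  have hgv_cont : Continuous fun s => f₂ s (v s) := hf₂_cont.comp (continuous_id.prodMk hv_cont)
  have hIeq : ∀ t ≥ (0:ℝ),
      iterInt (fun s => f₂ s (u s)) (m+1) t = iterInt (fun s => f₂ s (v s)) (m+1) t :=
    iterInt_congr _ _ _ fun s hs => by rw [hv_eq s hs]
  have hIl_cont : Continuous (iterInt (fun s => f₂ s (l s)) (m+1)) := continuous_iterInt hgl_cont _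
  have hIv_nonneg : ∀ t ≥ (0:ℝ), 0 ≤ iterInt (fun s => f₂ s (v s)) (m+1) t :=
    iterInt_nonneg hgv_cont (fun s => hf₂_nonneg _ _) _
  have hu_gt : ∀ t > (0:ℝ), f₁ t + iterInt (fun s => f₂ s (v s)) (m+1) t < u t := fun t ht => by
    rw [← hIeq t ht.le]; exact (hint t ht).1
  have hf₁_lt_u : ∀ t > (0:ℝ), f₁ t < u t := fun t ht =>
    lt_of_le_of_lt (le_add_of_nonneg_right (hIv_nonneg t ht.le)) (hu_gt t ht)
  have hl0 : l 0 ≤ f₁ 0 := by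
    have h1 : Filter.Tendsto l (nhdsWithin 0 (Set.Ioi 0)) (nhds (l 0)) :=
      hl_cont.continuousAt.tendsto.mono_left nhdsWithin_le_nhds
    have h2 : Filter.Tendsto (fun t => f₁ t + iterInt (fun s => f₂ s (l s)) (m+1) t)
        (nhdsWithin 0 (Set.Ioi 0)) (nhds (f₁ 0 + iterInt (fun s => f₂ s (l s)) (m+1) 0)) :=
      ((hf₁_cont.add hIl_cont).continuousAt.tendsto).mono_left nhdsWithin_le_nhds
    rw [iterInt_zero_eval, add_zero] at h2
    refine le_of_tendsto_of_tendsto h1 h2 ?_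
    exact Filter.eventually_of_mem self_mem_nhdsWithin fun s hs => (hint s hs).2
  have hu0 : f₁ 0 ≤ u 0 := by
    have h1 : Filter.Tendsto f₁ (nhdsWithin 0 (Set.Ioi 0)) (nhds (f₁ 0)) :=
      hf₁_cont.continuousAt.tendsto.mono_left nhdsWithin_le_nhds
    have h2 : Filter.Tendsto u (nhdsWithin 0 (Set.Ioi 0)) (nhds (u 0)) :=
      (hu_cont 0 Set.self_mem_Ici).mono_left (nhdsWithin_mono _ Set.Ioi_subset_Ici_self)
    refine le_of_tendsto_of_tendsto h1 h2 ?_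
    exact Filter.eventually_of_mem self_mem_nhdsWithin fun s hs => (hf₁_lt_u s hs).le
  intro t ht
  by_contra hcon
  push_neg at hcon
  set B : Set ℝ := {s | 0 ≤ s ∧ u s < l s} with hB_def
  have htB : t ∈ B := ⟨ht, hcon⟩
  have hBne : B.Nonempty := ⟨t, htB⟩
  have hbdd : BddBelow B := ⟨0, fun x hx => hx.1⟩
  set T := sInf B with hT_def
  have hT0 : 0 ≤ T := le_csInf hBne fun x hx => hx.1
  have hTle : ∀ s, 0 ≤ s → s < T → l s ≤ u s := by
    intro s hs0 hsT
    by_contra h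
    push_neg at h
    exact absurd (csInf_le hbdd ⟨hs0, h⟩) (not_le.mpr hsT)
  have hfinal : ¬ l T < u T := by
    intro hlt
    have hvT : v T = u T := hv_eq T hT0
    have hopen : IsOpen {x | l x < v x} := isOpen_lt hl_cont hv_cont
    have hmem : T ∈ {x | l x < v x} := by show l T < v T; rw [hvT]; exact hlt
    obtain ⟨ε, hε, hball⟩ := Metric.isOpen_iff.mp hopen T hmem
    obtain ⟨b, hbB, hblt⟩ := exists_lt_of_csInf_lt hBne
      (show sInf B < T + ε by rw [← hT_def]; linarith)
    have hbT : T ≤ b := csInf_le hbdd hbB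
    have hb : b ∈ Metric.ball T ε := by
      rw [Metric.mem_ball, Real.dist_eq, abs_of_nonneg (by linarith)]
      linarith
    have h1 : l b < v b := hball hb
    rw [hv_eq b (hT0.trans hbT)] at h1
    exact absurd hbB.2 (not_lt.mpr h1.le)
  rcases hT0.lt_or_eq with hTpos | hTzero
  · apply hfinal
    have hluT : l T ≤ u T := by
      have h1 : Filter.Tendsto l (nhdsWithin T (Set.Iio T)) (nhds (l T)) :=
        hl_cont.continuousAt.tendsto.mono_left nhdsWithin_le_nhds
      have h2 : Filter.Tendsto u (nhdsWithin T (Set.Iio T)) (nhds (u T)) :=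
        ((hu_cont.continuousAt (Ici_mem_nhds hTpos)).tendsto).mono_left nhdsWithin_le_nhds
      refine le_of_tendsto_of_tendsto h1 h2 ?_
      filter_upwards [Ioo_mem_nhdsLT hTpos] with s hs
      exact hTle s hs.1.le hs.2
    have hcomp : ∀ s ∈ Set.Ioc (0:ℝ) T, f₂ s (l s) ≤ f₂ s (v s) := by
      intro s hs
      have hls : l s ≤ u s := by
        rcases hs.2.lt_or_eq with h | h
        · exact hTle s hs.1.le h
        · rw [h]; exact hluT
      rw [hv_eq s hs.1.le]
      rcases lt_or_eq_of_le hls with h | h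
      · exact hmono s hs.1 _ _ h
      · rw [h]
    have hIm := iterInt_mono hgl_cont hgv_cont hTpos.le hcomp m T ⟨hT0, le_rfl⟩
    have h2 := (hint T hTpos).2
    have h3 := hu_gt T hTpos
    linarith
  · have hT0' : T = 0 := hTzero.symm
    rcases lt_or_eq_of_le (hl0.trans hu0) with hlu | hlu
    · exact hfinal (by rw [hT0']; exact hlu)
    · have hl0f : l 0 = f₁ 0 := le_antisymm hl0 (by linarith)
      have hu0f : u 0 = f₁ 0 := by linarith
      have hφc : Continuous fun s => max (v s) (l s) := hv_cont.max hl_cont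
      have h0 : max (v 0) (l 0) < f₁ 0 + δ := by
        rw [hv_eq 0 le_rfl, hu0f, hl0f]; simp [hδ]
      have hopen : IsOpen {x | max (v x) (l x) < f₁ 0 + δ} := isOpen_lt hφc continuous_const
      obtain ⟨ε₀, hε₀, hball⟩ := Metric.isOpen_iff.mp hopen 0 h0
      set ε := min (min (ε₀/2) δ) (min 1 (1/K₁)) with hε_def
      have hε_pos : 0 < ε :=
        lt_min (lt_min (by linarith) hδ) (lt_min one_pos (by positivity))
      have hεε₀ : ε < ε₀ :=
        lt_of_le_of_lt ((min_le_left _ _).trans (min_le_left _ _)) (by linarith)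
      have hεδ : ε ≤ δ := (min_le_left _ _).trans (min_le_right _ _)
      have hε1 : ε ≤ 1 := (min_le_right _ _).trans (min_le_left _ _)
      have hεK : K₁ * ε ≤ 1 := by
        have h := (min_le_right (min (ε₀/2) δ) (min 1 (1/K₁))).trans
          (min_le_right 1 (1/K₁))
        rw [le_div_iff₀ hK₁] at h
        nlinarith
      have hbound : ∀ s ∈ Set.Icc (0:ℝ) ε, v s < f₁ 0 + δ ∧ l s < f₁ 0 + δ := by
        intro s hs
        have hsb : s ∈ Metric.ball (0:ℝ) ε₀ := by
          rw [Metric.mem_ball, Real.dist_eq, sub_zero, abs_of_nonneg hs.1]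
          exact lt_of_le_of_lt hs.2 hεε₀
        have h := hball hsb
        exact ⟨lt_of_le_of_lt (le_max_left _ _) h, lt_of_le_of_lt (le_max_right _ _) h⟩
      obtain ⟨τ, hτ_mem, hτ_max⟩ := isCompact_Icc.exists_isMaxOn
        (Set.nonempty_Icc.mpr hε_pos.le) ((hl_cont.sub hv_cont).continuousOn)
      have hmax : ∀ x ∈ Set.Icc (0:ℝ) ε, l x - v x ≤ l τ - v τ := fun x hx => hτ_max hx
      set M := l τ - v τ with hM_def
      obtain ⟨b, hbB, hblt⟩ := exists_lt_of_csInf_lt hBne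
        (show sInf B < ε by rw [← hT_def, hT0']; exact hε_pos)
      have hb0 : 0 ≤ b := hbB.1
      have hMpos : 0 < M := by
        have h1 := hmax b ⟨hb0, hblt.le⟩
        have h2 := hbB.2
        rw [hv_eq b hb0] at h1
        linarith
      have hτ_pos : 0 < τ := by
        rcases lt_or_eq_of_le hτ_mem.1 with h | h
        · exact h
        · exfalso
          have : M = 0 := by rw [hM_def, ← h, hv_eq 0 le_rfl]; linarith
          linarith
      have hcomp : ∀ s ∈ Set.Ioc (0:ℝ) τ, f₂ s (l s) ≤ f₂ s (v s) + K₁ * M := by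
        intro s hs
        have hsε : s ≤ ε := hs.2.trans hτ_mem.2
        have hsδ : s ∈ Set.Icc (0:ℝ) δ := ⟨hs.1.le, hsε.trans hεδ⟩
        have hvs_mem : v s ∈ Set.Icc (f₁ 0) (f₁ 0 + δ) := by
          constructor
          · rw [hv_eq s hs.1.le, ← hu0f]
            exact hu_mono Set.self_mem_Ici hs.1.le hs.1.le
          · exact (hbound s ⟨hs.1.le, hsε⟩).1.le
        set l' := max (l s) (f₁ 0) with hl'_def
        have hl'_mem : l' ∈ Set.Icc (f₁ 0) (f₁ 0 + δ) :=
          ⟨le_max_right _ _, max_le (hbound s ⟨hs.1.le, hsε⟩).2.le (by linarith)⟩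
        have h1 : f₂ s (l s) ≤ f₂ s l' := by
          rcases lt_or_ge (l s) l' with h | h
          · exact hmono s hs.1 _ _ h
          · have he : l' = l s := le_antisymm h (le_max_left _ _)
            rw [he]
        have h2 : |f₂ s l' - f₂ s (v s)| ≤ K₁ * |l' - v s| :=
          hLip s hsδ l' hl'_mem (v s) hvs_mem
        have hMτ : l s - v s ≤ M := hmax s ⟨hs.1.le, hsε⟩
        have hl'M : l' - v s ≤ M := by
          rcases max_cases (l s) (f₁ 0) with ⟨h, _⟩ | ⟨h, _⟩
          · rw [hl'_def, h]; exact hMτ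
          · rw [hl'_def, h]; have := hvs_mem.1; linarith
        rcases le_or_gt l' (v s) with h | h
        · have h3 : f₂ s l' ≤ f₂ s (v s) := by
            rcases lt_or_eq_of_le h with h' | h'
            · exact hmono s hs.1 _ _ h'
            · rw [h']
          nlinarith
        · have habs : |l' - v s| ≤ M := by
            rw [abs_of_pos (by linarith)]; exact hl'M
          have h3 : f₂ s l' - f₂ s (v s) ≤ K₁ * M :=
            le_trans (le_trans (le_abs_self _) h2) (mul_le_mul_of_nonneg_left habs hK₁.le)
          linarith
      have hIm := iterInt_mono (g₂ := fun s => f₂ s (v s) + K₁ * M) hgl_cont (hgv_cont.add continuous_const) hτ_pos.le hcomp m τ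
        ⟨hτ_pos.le, le_rfl⟩
      have hadd := iterInt_add hgv_cont (continuous_const : Continuous fun _ : ℝ => K₁ * M)
        (m+1) τ
      have hconst := iterInt_const_le (mul_nonneg hK₁.le hMpos.le) m hτ_pos.le
        (hτ_mem.2.trans hε1)
      have h2 := (hint τ hτ_pos).2
      have h3 := hu_gt τ hτ_pos
      have hvτ : v τ = u τ := hv_eq τ hτ_pos.le
      have hKMτ : K₁ * M * τ ≤ M := by nlinarith [hτ_mem.2, mul_nonneg hK₁.le hMpos.le]
      rw [hadd] at hIm
      rw [hvτ] at hM_def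
      linarith
end

section
/- The integral ∫_{ℝ³} |q|^{-2} 𝟙_{(0,R]}(|q|) d³q = 4πR for every R > 0; consequently, if |k^∞_s(y+z) − k^∞_s((0,²y)+z)| ≤ G(²y) N^{-β} for all |¹y| ≤ N^{-β} with G integrable, then |∫_{ℝ^6} (¹y/|¹y|³) 𝟙_{(0,N^{-β}]}(|¹y|) k^∞_s(y+z) d^6y| ≤ 4π ‖G‖_{L¹} N^{-2β}. -/
open MeasureTheory

private abbrev E3S := EuclideanSpace ℝ (Fin 3)
private abbrev E3E := E3S × E3S

/-- The cut-off Coulomb kernel `q ↦ (q/|q|³) 𝟙_{(0, N^{-β}]}(|q|)`. -/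
noncomputable def cutoffKernel (β : ℝ) (N : ℕ) (q : EuclideanSpace ℝ (Fin 3)) :
    EuclideanSpace ℝ (Fin 3) :=
  if 0 < ‖q‖ ∧ ‖q‖ ≤ (N : ℝ) ^ (-β) then (‖q‖ ^ 3)⁻¹ • q else 0

open Set Metric in
/-- Integrability of a radial function on `ℝ³` from integrability of `r² f(r)` on `(0,∞)`. -/
private lemma radial_integrable {f : ℝ → ℝ}
    (hf : IntegrableOn (fun y => y ^ 2 * f y) (Set.Ioi (0 : ℝ))) :
    Integrable (fun x : EuclideanSpace ℝ (Fin 3) => f ‖x‖) := by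
  set E := EuclideanSpace ℝ (Fin 3)
  have hdim : Module.finrank ℝ E = 3 := finrank_euclideanSpace_fin
  -- Step 1: integrability on `(0,∞)` with density `r²`.
  have h5 : Integrable (fun r : Set.Ioi (0 : ℝ) => f r) (Measure.volumeIoiPow 2) := by
    rw [Measure.volumeIoiPow, integrable_withDensity_iff
      ((measurable_subtype_coe.pow_const 2).ennreal_ofReal)
      (Filter.Eventually.of_forall fun x => ENNReal.ofReal_lt_top)]
    have hcomap : IntegrableOn ((fun y => y ^ 2 * f y) ∘ (Subtype.val : Set.Ioi (0:ℝ) → ℝ))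
        ((Subtype.val : Set.Ioi (0:ℝ) → ℝ) ⁻¹' Set.Ioi 0) (volume.comap Subtype.val) :=
      ((MeasurableEmbedding.subtype_coe measurableSet_Ioi).integrableOn_iff_comap
        (by rw [Subtype.range_coe])).1 hf
    have : ((Subtype.val : Set.Ioi (0:ℝ) → ℝ) ⁻¹' Set.Ioi 0) = Set.univ := by
      ext x; simpa using x.2
    rw [this, integrableOn_univ] at hcomap
    refine hcomap.congr (Filter.Eventually.of_forall fun x => ?_)
    simp only [Function.comp]
    rw [ENNReal.toReal_ofReal (sq_nonneg _), mul_comm]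
  -- Step 2: integrability on the product space.
  have h4 : Integrable (f ∘ Subtype.val ∘ Prod.snd)
      ((volume : Measure E).toSphere.prod (Measure.volumeIoiPow 2)) := by
    have := (integrable_const (1 : ℝ)
      (μ := (volume : Measure E).toSphere)).mul_prod h5
    simpa [Function.comp_def] using this
  -- Step 3: transfer through the polar coordinate homeomorphism.
  have hmp := (volume : Measure E).measurePreserving_homeomorphUnitSphereProd
  rw [hdim] at hmp
  have h3 : Integrable (fun x : ({(0 : E)}ᶜ : Set E) => f ‖x.1‖)
      ((volume : Measure E).comap Subtype.val) :=
    ((hmp.integrable_comp_emb (Homeomorph.measurableEmbedding _)).2 h4).congr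
      (Filter.Eventually.of_forall fun x => by
        simp [homeomorphUnitSphereProd, homeomorphSphereProd_apply_snd_coe])
  -- Step 4: back to the whole space.
  have h2 : IntegrableOn (fun x : E => f ‖x‖) {(0 : E)}ᶜ volume := by
    rw [(MeasurableEmbedding.subtype_coe (measurableSet_singleton (0 : E)).compl).integrableOn_iff_comap
      (by rw [Subtype.range_coe])]
    rw [show ((Subtype.val : ({(0:E)}ᶜ : Set E) → E) ⁻¹' {(0:E)}ᶜ) = Set.univ by
      ext x; simpa using x.2, integrableOn_univ]
    exact h3
  have hres := restrict_compl_singleton (μ := (volume : Measure E)) (0 : E)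
  rw [← hres]
  exact h2

private lemma integral_radial (R : ℝ) (hR : 0 < R) :
    ∫ q : EuclideanSpace ℝ (Fin 3),
      (if ‖q‖ ∈ Set.Ioc (0 : ℝ) R then (‖q‖ ^ 2)⁻¹ else 0) = 4 * Real.pi * R := by
  have h := integral_fun_norm_addHaar (volume : Measure (EuclideanSpace ℝ (Fin 3)))
      (fun r => if r ∈ Set.Ioc (0 : ℝ) R then (r ^ 2)⁻¹ else 0)
  rw [finrank_euclideanSpace_fin] at h
  have hsπ : Real.sqrt Real.pi ≠ 0 := by
    positivity
  have hΓ : Real.Gamma ((3 : ℝ) / 2 + 1) = 3 / 4 * Real.sqrt Real.pi := by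
    rw [Real.Gamma_add_one (by norm_num), show (3 / 2 : ℝ) = 1 / 2 + 1 by norm_num,
      Real.Gamma_add_one (by norm_num), Real.Gamma_one_half_eq]
    ring
  have hball : (volume (Metric.ball (0 : EuclideanSpace ℝ (Fin 3)) 1)).toReal
      = 4 * Real.pi / 3 := by
    rw [EuclideanSpace.volume_ball]
    simp only [Fintype.card_fin, ENNReal.ofReal_one, one_pow, one_mul, Nat.cast_ofNat]
    rw [ENNReal.toReal_ofReal (by positivity)]
    rw [hΓ, show Real.sqrt Real.pi ^ 3 = Real.pi * Real.sqrt Real.pi by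
      rw [pow_succ, Real.sq_sqrt Real.pi_pos.le]]
    field_simp
  have hioi : (∫ y in Set.Ioi (0 : ℝ),
      y ^ 2 • (if y ∈ Set.Ioc (0 : ℝ) R then (y ^ 2)⁻¹ else 0)) = R := by
    rw [setIntegral_congr_fun measurableSet_Ioi
      (g := fun y => Set.indicator (Set.Ioc (0 : ℝ) R) (fun _ => (1 : ℝ)) y)
      (fun y hy => by
        by_cases hmem : y ∈ Set.Ioc (0 : ℝ) R <;>
          simp [hmem, Set.indicator, smul_eq_mul,
            mul_inv_cancel₀ (pow_ne_zero 2 (ne_of_gt (Set.mem_Ioi.1 hy)))])]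
    rw [setIntegral_indicator measurableSet_Ioc,
      show Set.Ioi (0 : ℝ) ∩ Set.Ioc (0 : ℝ) R = Set.Ioc (0 : ℝ) R from
        Set.inter_eq_right.2 Set.Ioc_subset_Ioi_self]
    simp [Real.volume_Ioc, hR.le]
  rw [measureReal_def, hball, hioi] at h
  rw [show (∫ q : EuclideanSpace ℝ (Fin 3),
      (if ‖q‖ ∈ Set.Ioc (0 : ℝ) R then (‖q‖ ^ 2)⁻¹ else 0)) =
    (∫ x : EuclideanSpace ℝ (Fin 3),
      (fun r => if r ∈ Set.Ioc (0 : ℝ) R then (r ^ 2)⁻¹ else 0) ‖x‖) from rfl, h]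
  rw [smul_eq_mul, nsmul_eq_mul]
  push_cast
  ring

theorem cancellation_estimate (β : ℝ) (hβ : 0 < β) (N : ℕ) :
    (∀ R > (0 : ℝ),
      ∫ q : EuclideanSpace ℝ (Fin 3),
        (if ‖q‖ ∈ Set.Ioc (0 : ℝ) R then (‖q‖ ^ 2)⁻¹ else 0) =
        4 * Real.pi * R) ∧
    (∀ (K : EuclideanSpace ℝ (Fin 3) × EuclideanSpace ℝ (Fin 3) → ℝ)
        (G : EuclideanSpace ℝ (Fin 3) → ℝ)
        (z : EuclideanSpace ℝ (Fin 3) × EuclideanSpace ℝ (Fin 3)),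
      Integrable (fun y : EuclideanSpace ℝ (Fin 3) × EuclideanSpace ℝ (Fin 3) =>
        K (y + z) • cutoffKernel β N y.1) →
      Integrable (fun y : EuclideanSpace ℝ (Fin 3) × EuclideanSpace ℝ (Fin 3) =>
        K ((0, y.2) + z) • cutoffKernel β N y.1) →
      Integrable G → (∀ v, 0 ≤ G v) →
      (∀ y : EuclideanSpace ℝ (Fin 3) × EuclideanSpace ℝ (Fin 3),
        ‖y.1‖ ≤ (N : ℝ) ^ (-β) →
        |K (y + z) - K ((0, y.2) + z)| ≤ G y.2 * (N : ℝ) ^ (-β)) →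
      ‖∫ y : EuclideanSpace ℝ (Fin 3) × EuclideanSpace ℝ (Fin 3),
          K (y + z) • cutoffKernel β N y.1‖ ≤
        4 * Real.pi * (∫ v, G v) * (N : ℝ) ^ (-(2 * β))) := by
  constructor
  · intro R hR
    exact integral_radial R hR
  · intro K G z h1 h2 hG hGpos hlip
    by_cases hN : N = 0
    · subst hN
      have hrz : ((0 : ℕ) : ℝ) ^ (-β) = 0 := by
        rw [Nat.cast_zero, Real.zero_rpow (neg_ne_zero.2 hβ.ne')]
      have hcK : ∀ q, cutoffKernel β 0 q = 0 := by
        intro q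
        simp only [cutoffKernel, hrz]
        rw [if_neg]
        rintro ⟨hq1, hq2⟩
        exact absurd (hq1.trans_le hq2) (lt_irrefl 0)
      simp [hcK, Real.zero_rpow (show -(2 * β) ≠ 0 from ne_of_lt (by linarith))]
    · have hNpos : (0 : ℝ) < N := Nat.cast_pos.2 (Nat.pos_of_ne_zero hN)
      set R := (N : ℝ) ^ (-β) with hRdef
      have hR : 0 < R := Real.rpow_pos_of_pos hNpos _
      -- the norm of the cut-off kernel
      have hnorm : ∀ q : E3S, ‖cutoffKernel β N q‖
          = if ‖q‖ ∈ Set.Ioc (0 : ℝ) R then (‖q‖ ^ 2)⁻¹ else 0 := by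
        intro q
        simp only [cutoffKernel, Set.mem_Ioc]
        split_ifs with h
        · have h0 : (0 : ℝ) < ‖q‖ := h.1
          rw [norm_smul, Real.norm_eq_abs, abs_of_nonneg (by positivity)]
          field_simp
        · simp
      -- integrability of the radial majorant
      have hrad : Integrable (fun q : E3S =>
          if ‖q‖ ∈ Set.Ioc (0 : ℝ) R then (‖q‖ ^ 2)⁻¹ else 0) := by
        refine radial_integrable
          (f := fun r => if r ∈ Set.Ioc (0 : ℝ) R then (r ^ 2)⁻¹ else 0) ?_
        have hind : Integrable
            (Set.indicator (Set.Ioc (0 : ℝ) R) (fun _ => (1 : ℝ))) :=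
          (integrable_indicator_iff measurableSet_Ioc).2
            (integrableOn_const measure_Ioc_lt_top.ne)
        refine hind.integrableOn.congr_fun (fun y hy => ?_) measurableSet_Ioi
        by_cases hmem : y ∈ Set.Ioc (0 : ℝ) R <;>
          simp [hmem, Set.indicator,
            mul_inv_cancel₀ (pow_ne_zero 2 (ne_of_gt (Set.mem_Ioi.1 hy)))]
      -- oddness
      have hodd : ∀ q : E3S, cutoffKernel β N (-q) = - cutoffKernel β N q := by
        intro q
        simp only [cutoffKernel, norm_neg]
        split_ifs with h
        · rw [smul_neg]
        · rw [neg_zero]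
      -- the reference term integrates to zero by antisymmetry
      have hzero : (∫ y : E3E, K ((0, y.2) + z) • cutoffKernel β N y.1) = 0 := by
        set g := fun y : E3E => K ((0, y.2) + z) • cutoffKernel β N y.1 with hg
        have hmp : MeasurePreserving (fun y : E3E => (-y.1, y.2)) volume volume := by
          rw [Measure.volume_eq_prod]
          exact (Measure.measurePreserving_neg volume).prod (MeasurePreserving.id volume)
        have hemb : MeasurableEmbedding (fun y : E3E => (-y.1, y.2)) :=
          (((Homeomorph.neg E3S).toMeasurableEquiv).prodCongr
            (MeasurableEquiv.refl E3S)).measurableEmbedding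
        have h0 : (∫ y : E3E, g (-y.1, y.2)) = ∫ y, g y :=
          hmp.integral_comp hemb g
        have h1' : (fun y : E3E => g (-y.1, y.2)) = fun y => - g y := by
          funext y
          show K ((0, y.2) + z) • cutoffKernel β N (-y.1) = _
          rw [hodd, smul_neg]
        rw [h1', integral_neg] at h0
        have h2' : (2 : ℝ) • (∫ y, g y) = 0 := by
          rw [two_smul]
          nth_rewrite 1 [← h0]
          simp
        simpa using (smul_eq_zero.1 h2').resolve_left (by norm_num)
      -- the integral equals the integral of the difference
      have key : (∫ y : E3E, K (y + z) • cutoffKernel β N y.1)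
          = ∫ y : E3E, (K (y + z) - K ((0, y.2) + z)) • cutoffKernel β N y.1 := by
        have hs : (∫ y : E3E, (K (y + z) • cutoffKernel β N y.1
              - K ((0, y.2) + z) • cutoffKernel β N y.1))
            = (∫ y : E3E, K (y + z) • cutoffKernel β N y.1)
              - ∫ y : E3E, K ((0, y.2) + z) • cutoffKernel β N y.1 :=
          integral_sub h1 h2
        rw [hzero, sub_zero] at hs
        rw [← hs]
        exact integral_congr_ae (Filter.Eventually.of_forall fun y => by simp [sub_smul])
      -- pointwise bound
      have hpt : ∀ y : E3E,
          ‖(K (y + z) - K ((0, y.2) + z)) • cutoffKernel β N y.1‖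
            ≤ (if ‖y.1‖ ∈ Set.Ioc (0 : ℝ) R then (‖y.1‖ ^ 2)⁻¹ else 0) * (G y.2 * R) := by
        intro y
        rw [norm_smul, Real.norm_eq_abs, hnorm, mul_comm]
        by_cases h : ‖y.1‖ ≤ R
        · refine mul_le_mul_of_nonneg_left (hlip y h) ?_
          split_ifs with h' <;> positivity
        · rw [if_neg fun hc => h hc.2]
          simp
      -- integrability of the bound
      have hbound : Integrable (fun y : E3E =>
          (if ‖y.1‖ ∈ Set.Ioc (0 : ℝ) R then (‖y.1‖ ^ 2)⁻¹ else 0) * (G y.2 * R)) := by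
        rw [Measure.volume_eq_prod]
        exact hrad.mul_prod (hG.mul_const R)
      have hRR : R * R = (N : ℝ) ^ (-(2 * β)) := by
        rw [hRdef, ← Real.rpow_add hNpos]
        ring_nf
      calc ‖∫ y : E3E, K (y + z) • cutoffKernel β N y.1‖
          = ‖∫ y : E3E, (K (y + z) - K ((0, y.2) + z)) • cutoffKernel β N y.1‖ := by
            rw [key]
        _ ≤ ∫ y : E3E,
              (if ‖y.1‖ ∈ Set.Ioc (0 : ℝ) R then (‖y.1‖ ^ 2)⁻¹ else 0) * (G y.2 * R) :=
            norm_integral_le_of_norm_le hbound (Filter.Eventually.of_forall hpt)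
        _ = (∫ q : E3S, if ‖q‖ ∈ Set.Ioc (0 : ℝ) R then (‖q‖ ^ 2)⁻¹ else 0)
              * (∫ v : E3S, G v * R) := by
            rw [Measure.volume_eq_prod]
            exact integral_prod_mul
              (fun q : E3S => if ‖q‖ ∈ Set.Ioc (0 : ℝ) R then (‖q‖ ^ 2)⁻¹ else 0)
              (fun v : E3S => G v * R)
        _ = (4 * Real.pi * R) * ((∫ v, G v) * R) := by
            rw [integral_radial R hR, integral_mul_const]
        _ = 4 * Real.pi * (∫ v, G v) * (R * R) := by ring
        _ = 4 * Real.pi * (∫ v, G v) * (N : ℝ) ^ (-(2 * β)) := by rw [hRR]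
end

section
/- Let Δ_N : [0,T] → [0,∞) be continuous with Δ_N(0) = 0 and satisfy Δ_N(t) ≤ C ln(N) ∫₀^t ∫₀^s Δ_N(r) dr ds + C N^{-2β} t for all t ∈ [0,T]. Then Δ_N(t) ≤ C N^{-2β} t e^{√(C ln N) · t} for all t ∈ [0,T]. -/
open intervalIntegral Finset Filter MeasureTheory

lemma integral_monomial (m : ℕ) (s : ℝ) :
    ∫ r in (0:ℝ)..s, r ^ m / (Nat.factorial m : ℝ) =
      s ^ (m+1) / (Nat.factorial (m+1) : ℝ) := by
  rw [intervalIntegral.integral_div, integral_pow]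
  have h1 : (Nat.factorial (m+1) : ℝ) = (m+1) * (Nat.factorial m : ℝ) := by
    push_cast [Nat.factorial_succ]; ring
  have hm : (Nat.factorial m : ℝ) ≠ 0 := by positivity
  rw [h1]
  field_simp
  simp

lemma sum_monomial_integral (a c : ℝ) (n : ℕ) (e : ℕ → ℕ) (s : ℝ) :
    ∫ r in (0:ℝ)..s, c * ∑ k ∈ Finset.range n, a ^ k * (r ^ (e k) / (Nat.factorial (e k) : ℝ))
      = c * ∑ k ∈ Finset.range n, a ^ k * (s ^ (e k + 1) / (Nat.factorial (e k + 1) : ℝ)) := by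
  rw [intervalIntegral.integral_const_mul]
  congr 1
  rw [intervalIntegral.integral_finset_sum]
  · exact Finset.sum_congr rfl fun k _ => by
      rw [intervalIntegral.integral_const_mul, integral_monomial]
  · intro k _
    exact (Continuous.intervalIntegrable (by continuity) _ _)

lemma even_sum_le_exp (x : ℝ) (hx : 0 ≤ x) (n : ℕ) :
    ∑ k ∈ Finset.range n, x ^ (2*k) / (Nat.factorial (2*k) : ℝ) ≤ Real.exp x := by
  have hinj : ∀ p ∈ Finset.range n, ∀ q ∈ Finset.range n, 2*p = 2*q → p = q := by
    intro p _ q _ h; omega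
  calc ∑ k ∈ Finset.range n, x ^ (2*k) / (Nat.factorial (2*k) : ℝ)
      = ∑ j ∈ (Finset.range n).image (fun k => 2*k), x ^ j / (Nat.factorial j : ℝ) := by
        rw [Finset.sum_image hinj]
    _ ≤ ∑ j ∈ Finset.range (2*n), x ^ j / (Nat.factorial j : ℝ) := by
        refine Finset.sum_le_sum_of_subset_of_nonneg ?_ (fun j _ _ => by positivity)
        intro j hj
        simp only [Finset.mem_image, Finset.mem_range] at hj ⊢
        obtain ⟨k, hk, rfl⟩ := hj; omega
    _ ≤ Real.exp x := Real.sum_le_exp_of_nonneg hx _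

set_option maxHeartbeats 1000000 in
theorem second_order_gronwall (C β T : ℝ) (hC : 0 < C) (hβ : 0 < β) (hT : 0 < T)
    (N : ℕ) (hN : 2 ≤ N) (Δ : ℝ → ℝ)
    (hcont : ContinuousOn Δ (Set.Icc 0 T)) (hnn : ∀ t, 0 ≤ Δ t) (h0 : Δ 0 = 0)
    (hyp : ∀ t ∈ Set.Icc (0 : ℝ) T,
      Δ t ≤ C * Real.log N * (∫ s in (0 : ℝ)..t, ∫ r in (0 : ℝ)..s, Δ r) +
        C * (N : ℝ) ^ (-(2 * β)) * t) :
    ∀ t ∈ Set.Icc (0 : ℝ) T,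
      Δ t ≤ C * (N : ℝ) ^ (-(2 * β)) * t *
        Real.exp (Real.sqrt (C * Real.log N) * t) := by
  set a : ℝ := C * Real.log N with ha_def
  set ε : ℝ := C * (N : ℝ) ^ (-(2 * β)) with hε_def
  have hN1 : (1:ℝ) < (N:ℝ) := by
    have : (2:ℝ) ≤ (N:ℝ) := by exact_mod_cast hN
    linarith
  have ha : 0 < a := mul_pos hC (Real.log_pos hN1)
  have hε : 0 < ε := mul_pos hC (Real.rpow_pos_of_pos (by linarith) _)
  obtain ⟨M, hM⟩ := (isCompact_Icc.image_of_continuousOn hcont).bddAbove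
  have hMle : ∀ u ∈ Set.Icc (0:ℝ) T, Δ u ≤ M := fun u hu => hM ⟨u, hu, rfl⟩
  have hΔint : ∀ u ∈ Set.Icc (0:ℝ) T, IntervalIntegrable Δ volume 0 u := by
    intro u hu
    have hsub : Set.Icc (0:ℝ) u ⊆ Set.Icc 0 T := Set.Icc_subset_Icc le_rfl hu.2
    have huIcc : Set.uIcc (0:ℝ) u = Set.Icc 0 u := Set.uIcc_of_le hu.1
    exact ContinuousOn.intervalIntegrable (huIcc ▸ hcont.mono hsub)
  have key : ∀ n : ℕ, ∀ t ∈ Set.Icc (0:ℝ) T,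
      Δ t ≤ ε * ∑ k ∈ Finset.range n, a ^ k * (t ^ (2*k+1) / (Nat.factorial (2*k+1) : ℝ))
            + M * (a ^ n * (t ^ (2*n) / (Nat.factorial (2*n) : ℝ))) := by
    intro n
    induction n with
    | zero =>
      intro t ht
      simpa using hMle t ht
    | succ n ih =>
      intro t ht
      obtain ⟨ht0, htT⟩ := ht
      have c1 : Continuous (fun r : ℝ =>
          ε * ∑ k ∈ Finset.range n, a ^ k * (r ^ (2*k+1) / (Nat.factorial (2*k+1) : ℝ))) :=
        continuous_const.mul (continuous_finset_sum _ fun k _ =>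
          continuous_const.mul ((continuous_pow _).div_const _))
      have c2 : Continuous (fun r : ℝ =>
          (M * a ^ n) * (r ^ (2*n) / (Nat.factorial (2*n) : ℝ))) :=
        continuous_const.mul ((continuous_pow _).div_const _)
      have hFint : ∀ s : ℝ, (∫ r in (0:ℝ)..s,
            (ε * ∑ k ∈ Finset.range n, a ^ k * (r ^ (2*k+1) / (Nat.factorial (2*k+1) : ℝ))
              + (M * a ^ n) * (r ^ (2*n) / (Nat.factorial (2*n) : ℝ))))
          = ε * ∑ k ∈ Finset.range n, a ^ k * (s ^ (2*k+2) / (Nat.factorial (2*k+2) : ℝ))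
            + (M * a ^ n) * (s ^ (2*n+1) / (Nat.factorial (2*n+1) : ℝ)) := by
        intro s
        have A := sum_monomial_integral a ε n (fun k => 2*k+1) s
        have B : (∫ r in (0:ℝ)..s, (M * a ^ n) * (r ^ (2*n) / (Nat.factorial (2*n) : ℝ)))
            = (M * a ^ n) * (s ^ (2*n+1) / (Nat.factorial (2*n+1) : ℝ)) := by
          rw [intervalIntegral.integral_const_mul, integral_monomial]
        rw [intervalIntegral.integral_add (c1.intervalIntegrable _ _) (c2.intervalIntegrable _ _),
          A, B]
      have inner : ∀ s ∈ Set.Icc (0:ℝ) t, (∫ r in (0:ℝ)..s, Δ r) ≤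
          ε * ∑ k ∈ Finset.range n, a ^ k * (s ^ (2*k+2) / (Nat.factorial (2*k+2) : ℝ))
            + (M * a ^ n) * (s ^ (2*n+1) / (Nat.factorial (2*n+1) : ℝ)) := by
        intro s hs
        have hsT : s ∈ Set.Icc (0:ℝ) T := ⟨hs.1, hs.2.trans htT⟩
        have h1 : (∫ r in (0:ℝ)..s, Δ r) ≤ ∫ r in (0:ℝ)..s,
            (ε * ∑ k ∈ Finset.range n, a ^ k * (r ^ (2*k+1) / (Nat.factorial (2*k+1) : ℝ))
              + (M * a ^ n) * (r ^ (2*n) / (Nat.factorial (2*n) : ℝ))) := by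
          refine intervalIntegral.integral_mono_on hs.1 (hΔint s hsT)
            ((c1.add c2).intervalIntegrable _ _) ?_
          intro r hr
          have hrT : r ∈ Set.Icc (0:ℝ) T := ⟨hr.1, hr.2.trans hsT.2⟩
          exact le_trans (ih r hrT) (le_of_eq (by ring))
        rw [hFint s] at h1
        exact h1
      have hprimcont : ContinuousOn (fun s => ∫ r in (0:ℝ)..s, Δ r) (Set.uIcc 0 t) := by
        apply continuousOn_primitive_interval
        have huIcc : Set.uIcc (0:ℝ) t = Set.Icc 0 t := Set.uIcc_of_le ht0
        rw [huIcc]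
        exact ContinuousOn.integrableOn_compact isCompact_Icc
          (hcont.mono (Set.Icc_subset_Icc le_rfl htT))
      have hprimint : IntervalIntegrable (fun s => ∫ r in (0:ℝ)..s, Δ r) volume 0 t :=
        hprimcont.intervalIntegrable
      have d1 : Continuous (fun s : ℝ =>
          ε * ∑ k ∈ Finset.range n, a ^ k * (s ^ (2*k+2) / (Nat.factorial (2*k+2) : ℝ))) :=
        continuous_const.mul (continuous_finset_sum _ fun k _ =>
          continuous_const.mul ((continuous_pow _).div_const _))
      have d2 : Continuous (fun s : ℝ =>
          (M * a ^ n) * (s ^ (2*n+1) / (Nat.factorial (2*n+1) : ℝ))) :=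
        continuous_const.mul ((continuous_pow _).div_const _)
      have outer : (∫ s in (0:ℝ)..t, ∫ r in (0:ℝ)..s, Δ r) ≤
          ε * ∑ k ∈ Finset.range n, a ^ k * (t ^ (2*k+3) / (Nat.factorial (2*k+3) : ℝ))
            + (M * a ^ n) * (t ^ (2*n+2) / (Nat.factorial (2*n+2) : ℝ)) := by
        have h2 : (∫ s in (0:ℝ)..t, ∫ r in (0:ℝ)..s, Δ r) ≤ ∫ s in (0:ℝ)..t,
            (ε * ∑ k ∈ Finset.range n, a ^ k * (s ^ (2*k+2) / (Nat.factorial (2*k+2) : ℝ))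
              + (M * a ^ n) * (s ^ (2*n+1) / (Nat.factorial (2*n+1) : ℝ))) :=
          intervalIntegral.integral_mono_on ht0 hprimint ((d1.add d2).intervalIntegrable _ _)
            (fun s hs => inner s hs)
        have A := sum_monomial_integral a ε n (fun k => 2*k+2) t
        have B : (∫ s in (0:ℝ)..t, (M * a ^ n) * (s ^ (2*n+1) / (Nat.factorial (2*n+1) : ℝ)))
            = (M * a ^ n) * (t ^ (2*n+2) / (Nat.factorial (2*n+2) : ℝ)) := by
          rw [intervalIntegral.integral_const_mul, integral_monomial]
        rw [intervalIntegral.integral_add (d1.intervalIntegrable _ _) (d2.intervalIntegrable _ _),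
          A, B] at h2
        simp only [show ∀ k : ℕ, 2*k+2+1 = 2*k+3 from fun k => by omega] at h2
        exact h2
      have hhyp := hyp t ⟨ht0, htT⟩
      have hcomb : Δ t ≤ a * (ε * ∑ k ∈ Finset.range n,
            a ^ k * (t ^ (2*k+3) / (Nat.factorial (2*k+3) : ℝ))
            + (M * a ^ n) * (t ^ (2*n+2) / (Nat.factorial (2*n+2) : ℝ))) + ε * t := by
        have h4 := mul_le_mul_of_nonneg_left outer ha.le
        linarith [hhyp, h4]
      have hsum : ∑ k ∈ Finset.range (n+1), a ^ k * (t ^ (2*k+1) / (Nat.factorial (2*k+1) : ℝ))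
          = (∑ k ∈ Finset.range n, a ^ (k+1) * (t ^ (2*k+3) / (Nat.factorial (2*k+3) : ℝ))) + t := by
        rw [Finset.sum_range_succ']
        simp only [show ∀ k : ℕ, 2*(k+1)+1 = 2*k+3 from fun k => by omega]
        norm_num
      have hfac : (∑ k ∈ Finset.range n, a ^ (k+1) * (t ^ (2*k+3) / (Nat.factorial (2*k+3) : ℝ)))
          = a * ∑ k ∈ Finset.range n, a ^ k * (t ^ (2*k+3) / (Nat.factorial (2*k+3) : ℝ)) := by
        rw [Finset.mul_sum]
        exact Finset.sum_congr rfl fun k _ => by rw [pow_succ]; ring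
      calc Δ t ≤ _ := hcomb
        _ = ε * ∑ k ∈ Finset.range (n+1), a ^ k * (t ^ (2*(k)+1) / (Nat.factorial (2*k+1) : ℝ))
            + M * (a ^ (n+1) * (t ^ (2*(n+1)) / (Nat.factorial (2*(n+1)) : ℝ))) := by
          rw [hsum, hfac, show 2*(n+1) = 2*n+2 from by omega]
          ring
  -- pass to the limit
  intro t ht
  obtain ⟨ht0, htT⟩ := ht
  set x : ℝ := Real.sqrt a * t with hx_def
  have hx0 : 0 ≤ x := mul_nonneg (Real.sqrt_nonneg _) ht0
  have hxpow : ∀ m : ℕ, x ^ (2*m) = a ^ m * t ^ (2*m) := by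
    intro m
    rw [hx_def, mul_pow, pow_mul, Real.sq_sqrt ha.le]
  have hsumle : ∀ n : ℕ,
      ∑ k ∈ Finset.range n, a ^ k * (t ^ (2*k+1) / (Nat.factorial (2*k+1) : ℝ))
        ≤ t * Real.exp x := by
    intro n
    have h1 : ∀ k : ℕ, a ^ k * (t ^ (2*k+1) / (Nat.factorial (2*k+1) : ℝ))
        ≤ t * (x ^ (2*k) / (Nat.factorial (2*k) : ℝ)) := by
      intro k
      have hfacle : (Nat.factorial (2*k) : ℝ) ≤ (Nat.factorial (2*k+1) : ℝ) := by
        exact_mod_cast Nat.factorial_le (by omega)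
      have hfac0 : (0:ℝ) < (Nat.factorial (2*k) : ℝ) := by positivity
      have hnum : (0:ℝ) ≤ a ^ k * t ^ (2*k+1) := by positivity
      have e1 : a ^ k * (t ^ (2*k+1) / (Nat.factorial (2*k+1) : ℝ))
          = (a ^ k * t ^ (2*k+1)) / (Nat.factorial (2*k+1) : ℝ) := by ring
      have e2 : t * (x ^ (2*k) / (Nat.factorial (2*k) : ℝ))
          = (a ^ k * t ^ (2*k+1)) / (Nat.factorial (2*k) : ℝ) := by
        rw [hxpow k, pow_succ]; ring
      rw [e1, e2]
      gcongr
    calc ∑ k ∈ Finset.range n, a ^ k * (t ^ (2*k+1) / (Nat.factorial (2*k+1) : ℝ))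
        ≤ ∑ k ∈ Finset.range n, t * (x ^ (2*k) / (Nat.factorial (2*k) : ℝ)) :=
          Finset.sum_le_sum fun k _ => h1 k
      _ = t * ∑ k ∈ Finset.range n, x ^ (2*k) / (Nat.factorial (2*k) : ℝ) := by
          rw [Finset.mul_sum]
      _ ≤ t * Real.exp x :=
          mul_le_mul_of_nonneg_left (even_sum_le_exp x hx0 n) ht0
  have hbound : ∀ n : ℕ, Δ t ≤ ε * t * Real.exp x
      + M * (x ^ (2*n) / (Nat.factorial (2*n) : ℝ)) := by
    intro n
    have hk := key n t ⟨ht0, htT⟩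
    have h2 : ε * ∑ k ∈ Finset.range n, a ^ k * (t ^ (2*k+1) / (Nat.factorial (2*k+1) : ℝ))
        ≤ ε * (t * Real.exp x) := mul_le_mul_of_nonneg_left (hsumle n) hε.le
    have h3 : M * (a ^ n * (t ^ (2*n) / (Nat.factorial (2*n) : ℝ)))
        = M * (x ^ (2*n) / (Nat.factorial (2*n) : ℝ)) := by
      rw [hxpow n]; ring
    calc Δ t ≤ _ := hk
      _ ≤ ε * (t * Real.exp x) + M * (a ^ n * (t ^ (2*n) / (Nat.factorial (2*n) : ℝ))) := by
          linarith [h2]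
      _ = ε * t * Real.exp x + M * (x ^ (2*n) / (Nat.factorial (2*n) : ℝ)) := by
          rw [h3]; ring
  have h2n : Tendsto (fun n : ℕ => 2*n) atTop atTop := by
    have hmono : StrictMono (fun n : ℕ => 2*n) := fun p q h => by dsimp only; omega
    exact hmono.tendsto_atTop
  have hrem : Tendsto (fun n : ℕ => M * (x ^ (2*n) / (Nat.factorial (2*n) : ℝ)))
      atTop (nhds 0) := by
    have h := (FloorSemiring.tendsto_pow_div_factorial_atTop x).comp h2n
    have h' := h.const_mul M
    simpa [Function.comp] using h'
  have hlim : Tendsto (fun n : ℕ => ε * t * Real.exp x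
      + M * (x ^ (2*n) / (Nat.factorial (2*n) : ℝ))) atTop (nhds (ε * t * Real.exp x)) := by
    simpa using tendsto_const_nhds.add hrem
  exact ge_of_tendsto' hlim hbound
end
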